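/- arXiv:2403.11782 — 5 statements merged into one kernel-verified Lean document; each statement's English description precedes it below -/
import Mathlib

section
/- Let X be a finite set and ≻ a binary relation on X. Then ≻ is asymmetric and negatively transitive if and only if there exists a function u : X → ℝ such that for all x,y ∈ X, x ≻ y iff u(x) > u(y). -/
/-- On a finite set, a binary relation is asymmetric and negatively transitive
iff it admits a utility representation. -/
theorem utility_representation_finite {X : Type*} [Fintype X] (R : X → X → Prop) :
    ((∀ x y, R x y → ¬ R y x) ∧ (∀ x y z, R x y → R x z ∨ R z y)) ↔
    (∃ u : X → ℝ, ∀ x y, R x y ↔ u x > u y) := by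
  classical
  constructor
  · rintro ⟨hasym, hnt⟩
    refine ⟨fun x => ((Finset.univ.filter (fun y => R x y)).card : ℝ), fun x y => ?_⟩
    constructor
    · intro hxy
      have hsub : Finset.univ.filter (fun z => R y z) ⊆ Finset.univ.filter (fun z => R x z) := by
        intro z hz
        simp only [Finset.mem_filter, Finset.mem_univ, true_and] at hz ⊢
        rcases hnt y z x hz with h | h
        · exact absurd h (hasym x y hxy)
        · exact h
      have hy : y ∈ Finset.univ.filter (fun z => R x z) := by
        simp [hxy]
      have hy' : y ∉ Finset.univ.filter (fun z => R y z) := by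
        simp only [Finset.mem_filter, Finset.mem_univ, true_and]
        exact fun h => hasym y y h h
      have : (Finset.univ.filter (fun z => R y z)).card <
          (Finset.univ.filter (fun z => R x z)).card :=
        Finset.card_lt_card ⟨hsub, fun h => hy' (h hy)⟩
      simp only [gt_iff_lt, Nat.cast_lt]
      exact this
    · intro h
      by_contra hxy
      have hsub : Finset.univ.filter (fun z => R x z) ⊆ Finset.univ.filter (fun z => R y z) := by
        intro z hz
        simp only [Finset.mem_filter, Finset.mem_univ, true_and] at hz ⊢
        rcases hnt x z y hz with h' | h'
        · exact absurd h' hxy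
        · exact h'
      have := Finset.card_le_card hsub
      have : ((Finset.univ.filter (fun z => R x z)).card : ℝ) ≤
          (Finset.univ.filter (fun z => R y z)).card := by exact_mod_cast this
      linarith
  · rintro ⟨u, hu⟩
    refine ⟨fun x y hxy hyx => ?_, fun x y z hxy => ?_⟩
    · rw [hu] at hxy hyx; linarith
    · rw [hu] at hxy ⊢
      rw [hu]
      rcases lt_or_ge (u z) (u x) with h | h
      · exact Or.inl h
      · exact Or.inr (lt_of_lt_of_le hxy h)
end

section
/- Let d be a positive integer, u : {1,…,d} → ℝ, and s ∈ {1,…,d}. Then ∫_{−∞}^{∞} exp(u_s − t) · exp(−(∑_{i=1}^d e^{u_i})·e^{−t}) dt = e^{u_s} / (∑_{i=1}^d e^{u_i}). In particular, under independent standard Gumbel noise added to the utilities u_i, the probability that alternative s attains the maximum perturbed utility equals the softmax value e^{u_s}/∑_i e^{u_i}. -/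
/-! The substitution `y = exp (-t)` maps ℝ onto `(0, ∞)` and turns the integral into
`exp c * ∫ y in Ioi 0, exp (-b * y) = exp c / b`; with `c = u s` and `b = ∑ i, exp (u i)` this is
the softmax value. -/

open MeasureTheory Set Real

theorem integral_comp_exp {E : Type*} [NormedAddCommGroup E] [NormedSpace ℝ E] (g : ℝ → E) :
    ∫ x, exp x • g (exp x) = ∫ y in Ioi 0, g y := by
  rw [← range_exp, ← image_univ, ← setIntegral_univ]
  simpa [abs_of_pos (exp_pos _)] using (integral_image_eq_integral_abs_deriv_smul
    MeasurableSet.univ (fun x _ ↦ (hasDerivAt_exp x).hasDerivWithinAt)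
    (fun x _ y _ hxy ↦ exp_injective hxy) g).symm

theorem integral_exp_sub_mul_exp_neg_mul_exp_neg (c : ℝ) {b : ℝ} (hb : 0 < b) :
    ∫ t, exp (c - t) * exp (-b * exp (-t)) = exp c / b := by
  have hfactor : ∀ t, exp (c - t) * exp (-b * exp (-t)) =
      exp c * (exp (-t) * exp (-b * exp (-t))) := fun t ↦ by
    rw [sub_eq_add_neg, exp_add, mul_assoc]
  simp_rw [hfactor]
  have hsubst : ∫ t, exp t * exp (-b * exp t) = ∫ y in Ioi 0, exp (-b * y) :=
    integral_comp_exp (fun y ↦ exp (-b * y))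
  rw [integral_const_mul, integral_neg_eq_self (fun t ↦ exp t * exp (-b * exp t)), hsubst,
    integral_exp_mul_Ioi (neg_lt_zero.2 hb), mul_zero, exp_zero, neg_div_neg_eq, mul_one_div]

theorem gumbel_max_softmax_general (d : ℕ) (u : Fin d → ℝ) (s : Fin d) :
    ∫ t : ℝ, Real.exp (u s - t) *
        Real.exp (-(∑ i : Fin d, Real.exp (u i)) * Real.exp (-t)) =
      Real.exp (u s) / ∑ i : Fin d, Real.exp (u i) :=
  integral_exp_sub_mul_exp_neg_mul_exp_neg (u s)
    (Finset.sum_pos (fun i _ ↦ exp_pos (u i)) ⟨s, Finset.mem_univ s⟩)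

/-- The Gumbel-max trick (Yellott's theorem): the probability that alternative s attains
the maximum Gumbel-perturbed utility, written as an integral, equals the softmax value. -/
theorem gumbel_max_softmax (d : ℕ) (hd : 0 < d) (u : Fin d → ℝ) (s : Fin d) :
    ∫ t : ℝ, Real.exp (u s - t) *
        Real.exp (-(∑ i : Fin d, Real.exp (u i)) * Real.exp (-t)) =
      Real.exp (u s) / ∑ i : Fin d, Real.exp (u i) :=
  gumbel_max_softmax_general d u s
end

section
/- Let X be a nonempty type and k : X × X → ℝ a symmetric positive semidefinite kernel. Define k_pref : (X × X) × (X × X) → ℝ by k_pref((x,y),(x',y')) = k(x,x') + k(y,y') − k(x,y') − k(y,x'). Then k_pref is a symmetric positive semidefinite kernel on X × X: for every n, every points (x₁,y₁),…,(xₙ,yₙ) ∈ X × X and every c ∈ ℝⁿ, ∑_{i,j} c_i c_j k_pref((x_i,y_i),(x_j,y_j)) ≥ 0. -/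
/-- The preference kernel k_pref((x,y),(x',y')) = k(x,x') + k(y,y') − k(x,y') − k(y,x')
induced by a symmetric positive semidefinite kernel k is itself a symmetric positive
semidefinite kernel on X × X. -/
theorem preference_kernel_psd {X : Type*} [Nonempty X] (k : X → X → ℝ)
    (hsymm : ∀ x y : X, k x y = k y x)
    (hpsd : ∀ (n : ℕ) (x : Fin n → X) (c : Fin n → ℝ),
      0 ≤ ∑ i : Fin n, ∑ j : Fin n, c i * c j * k (x i) (x j)) :
    (∀ p q : X × X,
      (k p.1 q.1 + k p.2 q.2 - k p.1 q.2 - k p.2 q.1) =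
      (k q.1 p.1 + k q.2 p.2 - k q.1 p.2 - k q.2 p.1)) ∧
    (∀ (n : ℕ) (xy : Fin n → X × X) (c : Fin n → ℝ),
      0 ≤ ∑ i : Fin n, ∑ j : Fin n, c i * c j *
        (k (xy i).1 (xy j).1 + k (xy i).2 (xy j).2
          - k (xy i).1 (xy j).2 - k (xy i).2 (xy j).1)) := by
  constructor
  · intro p q
    rw [hsymm p.1 q.1, hsymm p.2 q.2, hsymm p.1 q.2, hsymm p.2 q.1]
    ring
  · intro n xy c
    have h := hpsd (n + n) (Fin.append (fun i => (xy i).1) (fun i => (xy i).2))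
      (Fin.append c (fun i => -c i))
    simp only [Fin.sum_univ_add, Fin.append_left, Fin.append_right] at h
    calc (0:ℝ) ≤ _ := h
    _ = _ := by
      rw [← Finset.sum_add_distrib]
      apply Finset.sum_congr rfl
      intro i _
      rw [← Finset.sum_add_distrib, ← Finset.sum_add_distrib, ← Finset.sum_add_distrib]
      apply Finset.sum_congr rfl
      intro j _
      ring
end

section
/- Let X be a nonempty type and k : X × X → ℝ a symmetric positive semidefinite kernel. Define k_ntpref : (X × X) × (X × X) → ℝ by k_ntpref((x,y),(x',y')) = k(x,x')·k(y,y') − k(x,y')·k(y,x'). Then k_ntpref is a symmetric positive semidefinite kernel on X × X: for every n, every points (x₁,y₁),…,(xₙ,yₙ) ∈ X × X and every c ∈ ℝⁿ, ∑_{i,j} c_i c_j k_ntpref((x_i,y_i),(x_j,y_j)) ≥ 0. -/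
/-!
Let `K((x,y),(x',y')) = k(x,x')·k(y,y')` be the product kernel on `X × X`; it is positive
semidefinite by the Schur product theorem, and invariant under the swap `σ(x,y) = (y,x)`.
The preference kernel is `K(p,q) - K(p,σq)`, and its quadratic form with coefficients `c` at the
points `pᵢ` is half the quadratic form of `K` with coefficients `(c, -c)` at the points
`(pᵢ, σpᵢ)`.
-/

open Matrix Finset

namespace Matrix

theorem PosSemidef.toBlocks_sub {ι R : Type*} [Fintype ι] [DecidableEq ι] [CommRing R]
    [PartialOrder R] [StarRing R] {M : Matrix (ι ⊕ ι) (ι ⊕ ι) R} (hM : M.PosSemidef) :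
    (M.toBlocks₁₁ - M.toBlocks₁₂ - M.toBlocks₂₁ + M.toBlocks₂₂).PosSemidef := by
  have h := hM.conjTranspose_mul_mul_same (fromRows (1 : Matrix ι ι R) (-1))
  rw [← fromBlocks_toBlocks M, conjTranspose_fromRows_eq_fromCols_conjTranspose,
    fromCols_mul_fromBlocks, fromCols_mul_fromRows] at h
  convert h using 1
  simp only [conjTranspose_one, conjTranspose_neg, one_mul, neg_mul, mul_one, mul_neg]
  abel

theorem dotProduct_mulVec_eq_sum_sum {ι R : Type*} [Fintype ι] [CommSemiring R]
    (M : Matrix ι ι R) (c : ι → R) :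
    c ⬝ᵥ (M *ᵥ c) = ∑ i, ∑ j, c i * c j * M i j := by
  simp only [dotProduct, mulVec, mul_sum]
  exact sum_congr rfl fun i _ => sum_congr rfl fun j _ => by ring

end Matrix

section KernelMatrix

variable {X Y ι : Type*}

def kernelMatrix (k : X → X → ℝ) (z : ι → X) : Matrix ι ι ℝ :=
  of fun i j => k (z i) (z j)

@[simp]
theorem kernelMatrix_apply (k : X → X → ℝ) (z : ι → X) (i j : ι) :
    kernelMatrix k z i j = k (z i) (z j) :=
  rfl

theorem posSemidef_kernelMatrix {k : X → X → ℝ} (hsymm : ∀ x y : X, k x y = k y x)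
    (hpsd : ∀ (n : ℕ) (x : Fin n → X) (c : Fin n → ℝ),
      0 ≤ ∑ i : Fin n, ∑ j : Fin n, c i * c j * k (x i) (x j))
    [Fintype ι] (z : ι → X) : (kernelMatrix k z).PosSemidef := by
  let e := Fintype.equivFin ι
  have hfin : (kernelMatrix k (z ∘ e.symm)).PosSemidef := by
    refine .of_dotProduct_mulVec_nonneg (IsHermitian.ext fun i j => hsymm _ _) fun c => ?_
    simpa only [star_trivial, dotProduct_mulVec_eq_sum_sum, kernelMatrix_apply]
      using hpsd _ (z ∘ e.symm) c
  have hreindex : kernelMatrix k z = (kernelMatrix k (z ∘ e.symm)).submatrix e e := by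
    ext i j
    simp
  exact hreindex ▸ hfin.submatrix e

theorem posSemidef_kernelMatrix_sub_comp {K : Y → Y → ℝ} {σ : Y → Y}
    (hσ : Function.Involutive σ) (hK : ∀ p q, K (σ p) (σ q) = K p q) [Fintype ι] (z : ι → Y)
    (hz : (kernelMatrix K (Sum.elim z (σ ∘ z))).PosSemidef) :
    (kernelMatrix (fun p q => K p q - K p (σ q)) z).PosSemidef := by
  classical
  set M := kernelMatrix K (Sum.elim z (σ ∘ z))
  have hblocks : (2 : ℝ) • kernelMatrix (fun p q => K p q - K p (σ q)) z =
      M.toBlocks₁₁ - M.toBlocks₁₂ - M.toBlocks₂₁ + M.toBlocks₂₂ := by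
    ext i j
    have hswap : K (σ (z i)) (z j) = K (z i) (σ (z j)) := by rw [← hK, hσ]
    simp only [M, Matrix.smul_apply, kernelMatrix_apply, smul_eq_mul, toBlocks₁₁, toBlocks₁₂,
      toBlocks₂₁, toBlocks₂₂, Sum.elim_inl, Sum.elim_inr, Function.comp_apply, of_sub_of,
      Matrix.add_apply, of_apply, Pi.sub_apply, hswap, hK]
    ring
  have h := hz.toBlocks_sub.smul (show (0 : ℝ) ≤ 1 / 2 by norm_num)
  rwa [← hblocks, smul_smul, one_div_mul_cancel two_ne_zero, one_smul] at h

end KernelMatrix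

theorem nontransitive_preference_kernel_psd_general {X : Type*} (k : X → X → ℝ)
    (hsymm : ∀ x y : X, k x y = k y x)
    (hpsd : ∀ (n : ℕ) (x : Fin n → X) (c : Fin n → ℝ),
      0 ≤ ∑ i : Fin n, ∑ j : Fin n, c i * c j * k (x i) (x j)) :
    (∀ p q : X × X,
      (k p.1 q.1 * k p.2 q.2 - k p.1 q.2 * k p.2 q.1) =
      (k q.1 p.1 * k q.2 p.2 - k q.1 p.2 * k q.2 p.1)) ∧
    (∀ (n : ℕ) (xy : Fin n → X × X) (c : Fin n → ℝ),
      0 ≤ ∑ i : Fin n, ∑ j : Fin n, c i * c j *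
        (k (xy i).1 (xy j).1 * k (xy i).2 (xy j).2
          - k (xy i).1 (xy j).2 * k (xy i).2 (xy j).1)) := by
  refine ⟨fun p q => by rw [hsymm p.1, hsymm p.2, hsymm p.1 q.2, hsymm p.2 q.1]; ring,
    fun n xy c => ?_⟩
  let K : X × X → X × X → ℝ := fun p q => k p.1 q.1 * k p.2 q.2
  let w : Fin n ⊕ Fin n → X × X := Sum.elim xy (Prod.swap ∘ xy)
  have hK : (kernelMatrix K w).PosSemidef :=
    (posSemidef_kernelMatrix hsymm hpsd (Prod.fst ∘ w)).hadamard
      (posSemidef_kernelMatrix hsymm hpsd (Prod.snd ∘ w))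
  have hpref := posSemidef_kernelMatrix_sub_comp Prod.swap_swap
    (fun p q => mul_comm (k p.2 q.2) (k p.1 q.1)) xy hK
  simpa only [dotProduct_mulVec_eq_sum_sum, star_trivial, kernelMatrix_apply, K,
    Prod.fst_swap, Prod.snd_swap] using hpref.dotProduct_mulVec_nonneg c

/-- The nontransitive preference kernel
k_ntpref((x,y),(x',y')) = k(x,x')·k(y,y') − k(x,y')·k(y,x')
induced by a symmetric positive semidefinite kernel k is itself a symmetric positive
semidefinite kernel on X × X. -/
theorem nontransitive_preference_kernel_psd {X : Type*} [Nonempty X] (k : X → X → ℝ)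
    (hsymm : ∀ x y : X, k x y = k y x)
    (hpsd : ∀ (n : ℕ) (x : Fin n → X) (c : Fin n → ℝ),
      0 ≤ ∑ i : Fin n, ∑ j : Fin n, c i * c j * k (x i) (x j)) :
    (∀ p q : X × X,
      (k p.1 q.1 * k p.2 q.2 - k p.1 q.2 * k p.2 q.1) =
      (k q.1 p.1 * k q.2 p.2 - k q.1 p.2 * k q.2 p.1)) ∧
    (∀ (n : ℕ) (xy : Fin n → X × X) (c : Fin n → ℝ),
      0 ≤ ∑ i : Fin n, ∑ j : Fin n, c i * c j *
        (k (xy i).1 (xy j).1 * k (xy i).2 (xy j).2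
          - k (xy i).1 (xy j).2 * k (xy i).2 (xy j).1)) :=
  nontransitive_preference_kernel_psd_general k hsymm hpsd
end

section
/- Let X be a finite nonempty set and let C be a choice function on X, i.e. a map assigning to every nonempty subset A ⊆ X a nonempty subset C(A) ⊆ A. Then there exists a finite family of strict total orders ≻₁,…,≻_d on X that Pareto-rationalises C — meaning that for every nonempty A ⊆ X and every o ∈ A, o ∈ C(A) if and only if there is no v ∈ A with v ≻_k o for all k ∈ {1,…,d} — if and only if C satisfies the Chernoff, Expansion, and Aizerman properties. -/
/-!
Pareto dominance `D v o := ∀ k, v ≻ₖ o` is a strict partial order and `C A` is the set of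
`D`-undominated elements of `A`. Such a choice function satisfies Chernoff and Expansion for any
relation `D`, and Aizerman because, `X` being finite, every dominated element of `A` is dominated
by an undominated one.

Conversely, let `x` beat `y` when `y ∉ C {x, y}`. Chernoff and Expansion say exactly that `C A`
consists of the elements of `A` beaten by nothing in `A`, and Aizerman, applied to
`C {x, y, z} ⊆ {x, z} ⊆ {x, y, z}`, makes beating transitive. A strict partial order on a finite
set is the intersection of finitely many linear extensions: for each incomparable pair `(a, b)`
take one, by Szpilrajn, that puts `b` above `a`.
-/

open Finset Relation

section LinearExtension

variable {α : Type*}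

theorem exists_isStrictTotalOrder_le (r : α → α → Prop) [IsStrictOrder α r] :
    ∃ s, IsStrictTotalOrder α s ∧ r ≤ s := by
  let := partialOrderOfSO r
  exact ⟨@LT.lt (LinearExtension α) _,
    inferInstanceAs (IsStrictTotalOrder (LinearExtension α) (· < ·)),
    fun _ _ h => (toLinearExtension.monotone.strictMono_of_injective fun _ _ => id) h⟩

theorem exists_isStrictTotalOrder_le_of_not_rel (r : α → α → Prop) [IsStrictOrder α r]
    {a b : α} (hab : a ≠ b) (h : ¬ r a b) :
    ∃ s, IsStrictTotalOrder α s ∧ r ≤ s ∧ s b a := by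
  -- `r` with the pair `(b, a)` added, closed under transitivity
  let r' x y := r x y ∨ ReflGen r x b ∧ ReflGen r a y
  have not_reflGen_ab : ¬ ReflGen r a b := by
    rintro (_ | hr)
    exacts [hab rfl, h hr]
  have : IsStrictOrder α r' :=
    { irrefl x := by
        rintro (hx | ⟨hxb, hax⟩)
        exacts [irrefl x hx, not_reflGen_ab (_root_.trans hax hxb)]
      trans x y z := by
        rintro (hxy | ⟨hxb, hay⟩) (hyz | ⟨hyb, haz⟩)
        · exact .inl (_root_.trans hxy hyz)
        · exact .inr ⟨_root_.trans (ReflGen.single hxy) hyb, haz⟩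
        · exact .inr ⟨hxb, _root_.trans hay (ReflGen.single hyz)⟩
        · exact (not_reflGen_ab (_root_.trans hay hyb)).elim }
  obtain ⟨s, hs, hr's⟩ := exists_isStrictTotalOrder_le r'
  exact ⟨s, hs, fun x y hxy => hr's x y (.inl hxy), hr's b a (.inr ⟨.refl, .refl⟩)⟩

theorem exists_fin_isStrictTotalOrder_forall_iff [Fintype α] (r : α → α → Prop)
    [IsStrictOrder α r] : ∃ (d : ℕ) (rel : Fin d → α → α → Prop),
      (∀ k, IsStrictTotalOrder α (rel k)) ∧ ∀ x y, (∀ k, rel k x y) ↔ r x y := by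
  have extension (p : α × α) : ∃ s, IsStrictTotalOrder α s ∧ r ≤ s ∧
      (p.1 ≠ p.2 → ¬ r p.1 p.2 → s p.2 p.1) := by
    by_cases hp : p.1 ≠ p.2 ∧ ¬ r p.1 p.2
    · obtain ⟨s, hs, hrs, hba⟩ := exists_isStrictTotalOrder_le_of_not_rel r hp.1 hp.2
      exact ⟨s, hs, hrs, fun _ _ => hba⟩
    · obtain ⟨s, hs, hrs⟩ := exists_isStrictTotalOrder_le r
      exact ⟨s, hs, hrs, fun h₁ h₂ => (hp ⟨h₁, h₂⟩).elim⟩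
  choose s hs hrs hswap using extension
  let e := (Fintype.equivFin (α × α)).symm
  refine ⟨_, fun k => s (e k), fun k => hs (e k),
    fun x y => ⟨fun hxy => ?_, fun h k => hrs _ x y h⟩⟩
  have hxy' : s (x, y) x y := by simpa using hxy (e.symm (x, y))
  have := hs (x, y)
  by_contra hr
  rcases eq_or_ne x y with rfl | hne
  · exact irrefl x hxy'
  · exact asymm hxy' (hswap (x, y) hne hr)

end LinearExtension

namespace ChoiceFunction

variable {X : Type*} {C : Finset X → Finset X}

def IsRationalisedBy (C : Finset X → Finset X) (D : X → X → Prop) : Prop :=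
  ∀ A : Finset X, ∀ o ∈ A, (o ∈ C A ↔ ∀ v ∈ A, ¬ D v o)

theorem isRationalisedBy_iff {D : X → X → Prop} :
    IsRationalisedBy C D ↔
      ∀ A : Finset X, A.Nonempty → ∀ o ∈ A, (o ∈ C A ↔ ¬ ∃ v ∈ A, D v o) := by
  simp only [IsRationalisedBy, not_exists, not_and]
  exact ⟨fun h A _ => h A, fun h A o ho => h A ⟨o, ho⟩ o ho⟩

theorem mem_choice_singleton (hsub : ∀ A, C A ⊆ A)
    (hne : ∀ A : Finset X, A.Nonempty → (C A).Nonempty) (x : X) : x ∈ C {x} := by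
  rw [((hne {x} (singleton_nonempty x)).subset_singleton_iff).1 (hsub {x})]
  exact mem_singleton_self x

def Aizerman (C : Finset X → Finset X) : Prop :=
  ∀ A A' : Finset X, C A ⊆ A' → A' ⊆ A → C A' ⊆ C A

namespace IsRationalisedBy

variable {D : X → X → Prop}

theorem irrefl (hsub : ∀ A, C A ⊆ A) (hne : ∀ A : Finset X, A.Nonempty → (C A).Nonempty)
    (hD : IsRationalisedBy C D) (x : X) : ¬ D x x :=
  (hD {x} x (mem_singleton_self x)).1 (mem_choice_singleton hsub hne x) x (mem_singleton_self x)

theorem exists_mem_choice_rel [Finite X] [IsTrans X D] [Std.Irrefl D]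
    (hD : IsRationalisedBy C D) {A : Finset X} {v o : X} (hv : v ∈ A) (hvo : D v o) :
    ∃ m ∈ C A, D m o := by
  obtain ⟨m, ⟨hmA, hmo⟩, hmin⟩ :=
    (Finite.wellFounded_of_trans_of_irrefl D).has_min {u | u ∈ A ∧ D u o} ⟨v, hv, hvo⟩
  exact ⟨m, (hD A m hmA).2 fun w hw hwm => hmin w ⟨hw, _root_.trans hwm hmo⟩ hwm, hmo⟩

theorem aizerman [Finite X] [IsTrans X D] (hsub : ∀ A, C A ⊆ A)
    (hne : ∀ A : Finset X, A.Nonempty → (C A).Nonempty) (hD : IsRationalisedBy C D) :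
    Aizerman C := by
  have : Std.Irrefl D := ⟨hD.irrefl hsub hne⟩
  intro A A' hCA' hA'A o ho
  have hoA' := hsub A' ho
  refine (hD A o (hA'A hoA')).2 fun v hv hvo => ?_
  obtain ⟨m, hm, hmo⟩ := hD.exists_mem_choice_rel hv hvo
  exact (hD A' o hoA').1 ho m (hCA' hm) hmo

end IsRationalisedBy

variable [DecidableEq X]

def Chernoff (C : Finset X → Finset X) : Prop :=
  ∀ A A' : Finset X, A' ⊆ A → C A ∩ A' ⊆ C A'

def Expansion (C : Finset X → Finset X) : Prop :=
  ∀ A A' : Finset X, C A ∩ C A' ⊆ C (A ∪ A')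

namespace IsRationalisedBy

variable {D : X → X → Prop}

theorem chernoff (hsub : ∀ A, C A ⊆ A) (hD : IsRationalisedBy C D) : Chernoff C := by
  intro A A' hA' o ho
  rw [mem_inter] at ho
  refine (hD A' o ho.2).2 fun v hv => ?_
  exact (hD A o (hsub A ho.1)).1 ho.1 v (hA' hv)

theorem expansion (hsub : ∀ A, C A ⊆ A) (hD : IsRationalisedBy C D) : Expansion C := by
  intro A A' o ho
  rw [mem_inter] at ho
  have hoA := hsub A ho.1
  refine (hD _ o (mem_union_left A' hoA)).2 fun v hv => ?_
  rcases mem_union.1 hv with hv | hv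
  · exact (hD A o hoA).1 ho.1 v hv
  · exact (hD A' o (hsub A' ho.2)).1 ho.2 v hv

end IsRationalisedBy

def Beats (C : Finset X → Finset X) (x y : X) : Prop :=
  y ∉ C {x, y}

theorem Beats.asymm (hsub : ∀ A, C A ⊆ A)
    (hne : ∀ A : Finset X, A.Nonempty → (C A).Nonempty) {x y : X} (hxy : Beats C x y) :
    ¬ Beats C y x := by
  obtain ⟨w, hw⟩ := hne {x, y} (insert_nonempty x {y})
  rcases mem_insert.1 (hsub _ hw) with rfl | hw'
  · unfold Beats
    rw [pair_comm, not_not]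
    exact hw
  · exact (hxy (mem_singleton.1 hw' ▸ hw)).elim

theorem Chernoff.not_beats_of_mem_choice (hsub : ∀ A, C A ⊆ A) (hCh : Chernoff C)
    {A : Finset X} {o v : X} (ho : o ∈ C A) (hv : v ∈ A) : ¬ Beats C v o := fun hvo =>
  hvo (hCh A {v, o} (insert_subset hv (singleton_subset_iff.2 (hsub A ho)))
    (mem_inter.2 ⟨ho, mem_insert_of_mem (mem_singleton_self o)⟩))

theorem Expansion.mem_choice_biUnion {ι : Type*} [DecidableEq ι] (hExp : Expansion C)
    {I : Finset ι} (hI : I.Nonempty) {S : ι → Finset X} {o : X}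
    (h : ∀ i ∈ I, o ∈ C (S i)) :
    o ∈ C (I.biUnion S) := by
  induction hI using Nonempty.cons_induction with
  | singleton i => simpa using h i (mem_singleton_self i)
  | cons i I hi hI ih =>
    rw [cons_eq_insert, biUnion_insert]
    simp only [cons_eq_insert, mem_insert, forall_eq_or_imp] at h
    exact hExp _ _ (mem_inter.2 ⟨h.1, ih h.2⟩)

theorem Expansion.mem_choice_of_forall_not_beats (hExp : Expansion C) {A : Finset X} {o : X}
    (ho : o ∈ A) (h : ∀ v ∈ A, ¬ Beats C v o) : o ∈ C A := by
  have hA : A.biUnion (fun v => {v, o}) = A := by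
    ext u
    simp only [mem_biUnion, mem_insert, mem_singleton]
    exact ⟨by rintro ⟨v, hv, rfl | rfl⟩ <;> assumption, fun hu => ⟨u, hu, .inl rfl⟩⟩
  rw [← hA]
  exact hExp.mem_choice_biUnion ⟨o, ho⟩ fun v hv => not_not.1 (h v hv)

theorem isRationalisedBy_beats (hsub : ∀ A, C A ⊆ A) (hCh : Chernoff C) (hExp : Expansion C) :
    IsRationalisedBy C (Beats C) := fun _ _ ho =>
  ⟨fun hoC _ hv => hCh.not_beats_of_mem_choice hsub hoC hv,
    hExp.mem_choice_of_forall_not_beats ho⟩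

theorem Aizerman.beats_trans (hsub : ∀ A, C A ⊆ A)
    (hne : ∀ A : Finset X, A.Nonempty → (C A).Nonempty) (hCh : Chernoff C) (hAiz : Aizerman C)
    {x y z : X} (hxy : Beats C x y) (hyz : Beats C y z) : Beats C x z := by
  set A : Finset X := {x, y, z}
  have hCA : C A ⊆ {x} := by
    intro u hu
    have hu' := hsub A hu
    simp only [A, mem_insert, mem_singleton] at hu'
    rcases hu' with rfl | rfl | rfl
    · exact mem_singleton_self u
    · exact (hCh.not_beats_of_mem_choice hsub hu (by simp [A]) hxy).elim
    · exact (hCh.not_beats_of_mem_choice hsub hu (by simp [A]) hyz).elim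
  intro hz
  have hzx : z = x :=
    mem_singleton.1 (hCA (hAiz A {x, z} (hCA.trans (by simp)) (by simp [A, insert_subset_iff])
      hz))
  subst hzx
  exact Beats.asymm hsub hne hxy hyz

theorem isStrictOrder_beats (hsub : ∀ A, C A ⊆ A)
    (hne : ∀ A : Finset X, A.Nonempty → (C A).Nonempty) (hCh : Chernoff C) (hAiz : Aizerman C) :
    IsStrictOrder X (Beats C) where
  irrefl _ hx := Beats.asymm hsub hne hx hx
  trans _ _ _ := hAiz.beats_trans hsub hne hCh

end ChoiceFunction

theorem pareto_rationalisable_iff_chernoff_expansion_aizerman_general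
    {X : Type*} [Fintype X] [DecidableEq X]
    (C : Finset X → Finset X)
    (hsub : ∀ A, C A ⊆ A)
    (hne : ∀ A : Finset X, A.Nonempty → (C A).Nonempty) :
    (∃ (d : ℕ) (rel : Fin d → X → X → Prop),
      (∀ k, IsStrictTotalOrder X (rel k)) ∧
      (∀ A : Finset X, A.Nonempty → ∀ o ∈ A,
        (o ∈ C A ↔ ¬ ∃ v ∈ A, ∀ k, rel k v o))) ↔
    ((∀ A A' : Finset X, A' ⊆ A → C A ∩ A' ⊆ C A') ∧
     (∀ A A' : Finset X, C A ∩ C A' ⊆ C (A ∪ A')) ∧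
     (∀ A A' : Finset X, C A ⊆ A' → A' ⊆ A → C A' ⊆ C A)) := by
  constructor
  · rintro ⟨d, rel, hrel, hC⟩
    have hD := ChoiceFunction.isRationalisedBy_iff.2 hC
    have : IsTrans X fun v o => ∀ k, rel k v o :=
      ⟨fun _ _ _ hab hbc k => (hrel k).trans _ _ _ (hab k) (hbc k)⟩
    exact ⟨hD.chernoff hsub, hD.expansion hsub, hD.aizerman hsub hne⟩
  · rintro ⟨hCh, hExp, hAiz⟩
    have := ChoiceFunction.isStrictOrder_beats hsub hne hCh hAiz
    obtain ⟨d, rel, hrel, hbeats⟩ :=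
      exists_fin_isStrictTotalOrder_forall_iff (ChoiceFunction.Beats C)
    have hpareto : (fun v o => ∀ k, rel k v o) = ChoiceFunction.Beats C :=
      funext₂ fun v o => propext (hbeats v o)
    refine ⟨d, rel, hrel, ChoiceFunction.isRationalisedBy_iff.1 ?_⟩
    rw [hpareto]
    exact ChoiceFunction.isRationalisedBy_beats hsub hCh hExp

/-- Moulin's theorem: a choice function on a finite set is Pareto-rationalisable by
a finite family of strict total orders iff it satisfies Chernoff, Expansion and
Aizerman. -/
theorem pareto_rationalisable_iff_chernoff_expansion_aizerman
    {X : Type*} [Fintype X] [DecidableEq X] [Nonempty X]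
    (C : Finset X → Finset X)
    (hsub : ∀ A, C A ⊆ A)
    (hne : ∀ A : Finset X, A.Nonempty → (C A).Nonempty) :
    (∃ (d : ℕ) (rel : Fin d → X → X → Prop),
      (∀ k, IsStrictTotalOrder X (rel k)) ∧
      (∀ A : Finset X, A.Nonempty → ∀ o ∈ A,
        (o ∈ C A ↔ ¬ ∃ v ∈ A, ∀ k, rel k v o))) ↔
    ((∀ A A' : Finset X, A' ⊆ A → C A ∩ A' ⊆ C A') ∧
     (∀ A A' : Finset X, C A ∩ C A' ⊆ C (A ∪ A')) ∧
     (∀ A A' : Finset X, C A ⊆ A' → A' ⊆ A → C A' ⊆ C A)) :=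
  pareto_rationalisable_iff_chernoff_expansion_aizerman_general C hsub hne
end
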